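/- For any completion-minimal insertion node u of the cotree T, there is exactly one inclusion-minimal constrained cograph completion of G+x whose associated insertion node is u, namely the completion anchored at u. -/

import Mathlib

/-!
Let `N` be an inclusion-minimal completion with insertion node `u`. Outside `V(u)` the
neighbourhood of `x` is dictated by the insertion characterisation, and inside `V(u)` it is a
union of children of `u`, since these are uniform. A child `c` of `u` that is hollow in `N(x)`
can be deleted from `N` without creating an induced `P₄`: in the new graph both `V(u) ∪ {x}`
and each child of `u` are modules, and an induced `P₄` meeting a module in two vertices lies
inside it. Hence a `P₄` through `x` and a leaf of `u` would have its three other vertices in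
pairwise distinct children of `u`, so they would be pairwise adjacent or pairwise
non-adjacent, which a `P₄` does not allow. By minimality `N` therefore consists of exactly the
vertices of the anchored completion; the completion witnessing that `u` is completion-minimal
shows that it occurs.
-/

universe u

def IsCograph {α : Type*} (G : SimpleGraph α) : Prop :=
  ¬ ∃ f : Fin 4 → α, Function.Injective f ∧
      ∀ i j : Fin 4, G.Adj (f i) (f j) ↔ (i.val + 1 = j.val ∨ j.val + 1 = i.val)

inductive Cotree (V : Type u) : Type u where
  | leaf : V → Cotree V
  | node : Bool → List (Cotree V) → Cotree V

namespace Cotree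

variable {V : Type u}

def leaves : Cotree V → List V
  | .leaf v => [v]
  | .node _ ts => ts.attach.flatMap (fun t => t.1.leaves)

decreasing_by simp_wf; have := List.sizeOf_lt_of_mem t.2; omega

def subtrees : Cotree V → List (Cotree V)
  | .leaf v => [.leaf v]
  | .node b ts => .node b ts :: ts.attach.flatMap (fun t => t.1.subtrees)

decreasing_by simp_wf; have := List.sizeOf_lt_of_mem t.2; omega

def children : Cotree V → List (Cotree V)
  | .leaf _ => []
  | .node _ ts => ts

def isSeries : Cotree V → Prop
  | .node true _ => True
  | _ => False

def isParallel : Cotree V → Prop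
  | .node false _ => True
  | _ => False

def adj : Cotree V → V → V → Prop
  | .leaf _, _, _ => False
  | .node b ts, x, y =>
      (∃ t ∈ ts.attach, adj t.1 x y) ∨
      (b = true ∧ ∃ t ∈ ts.attach, ∃ s ∈ ts.attach,
        t.1 ≠ s.1 ∧ x ∈ t.1.leaves ∧ y ∈ s.1.leaves)

decreasing_by simp_wf; have := List.sizeOf_lt_of_mem t.2; omega

def valid : Cotree V → Prop
  | .leaf _ => True
  | .node b ts => 2 ≤ ts.length ∧ ∀ t ∈ ts.attach, valid t.1 ∧
      ∀ b' ts', t.1 = .node b' ts' → b' ≠ b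

decreasing_by simp_wf; have := List.sizeOf_lt_of_mem t.2; omega

def hollow (N : Set V) (t : Cotree V) : Prop := ∀ v ∈ t.leaves, v ∉ N
def full (N : Set V) (t : Cotree V) : Prop := ∀ v ∈ t.leaves, v ∈ N
def uniform (N : Set V) (t : Cotree V) : Prop := full N t ∨ hollow N t
def mixed (N : Set V) (t : Cotree V) : Prop := ¬ uniform N t

def forced (N : Set V) : Cotree V → Prop
  | .leaf v => v ∈ N
  | .node b ts =>
      full N (.node b ts) ∨
      (b = false ∧ ∀ t ∈ ts, ¬ hollow N t) ∨
      (b = true ∧ ∀ t ∈ ts.attach, forced N t.1)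

decreasing_by simp_wf; have := List.sizeOf_lt_of_mem t.2; omega

def eligible (N : Set V) : Cotree V → Cotree V → Prop
  | .leaf v, u => u = .leaf v
  | .node b ts, u => u = .node b ts ∨
      ∃ t ∈ ts.attach, eligible N t.1 u ∧
        (b = false → ∀ s ∈ ts, s ≠ t.1 → hollow N s)

decreasing_by simp_wf; have := List.sizeOf_lt_of_mem t.2; omega

def IsLcaLeaves (T u : Cotree V) (x y : V) : Prop :=
  u ∈ T.subtrees ∧ x ∈ u.leaves ∧ y ∈ u.leaves ∧
    ∀ c ∈ u.children, ¬ (x ∈ c.leaves ∧ y ∈ c.leaves)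

def IsLcaNodeLeaf (T w u : Cotree V) (y : V) : Prop :=
  w ∈ T.subtrees ∧ u ∈ w.subtrees ∧ y ∈ w.leaves ∧
    ∀ c ∈ w.children, ¬ (u ∈ c.subtrees ∧ y ∈ c.leaves)

def graphOf (T : Cotree V) : SimpleGraph V :=
  SimpleGraph.fromRel (fun a b => T.adj a b)

def graphPlus (T : Cotree V) (N : Set V) : SimpleGraph (Option V) :=
  SimpleGraph.fromRel (fun a b =>
    match a, b with
    | some u, some v => T.adj u v
    | none, some v => v ∈ N
    | _, _ => False)

def IsConstrainedCompletion (T : Cotree V) (Nx N' : Set V) : Prop :=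
  Nx ⊆ N' ∧ (∀ v ∈ N', v ∈ T.leaves) ∧ IsCograph (graphPlus T N')

def IsMinimalConstrainedCompletion (T : Cotree V) (Nx N' : Set V) : Prop :=
  IsConstrainedCompletion T Nx N' ∧
    ∀ N'' ⊆ N', IsConstrainedCompletion T Nx N'' → N'' = N'

def IsInsertionNode (T : Cotree V) (N' : Set V) (u : Cotree V) : Prop :=
  u ∈ T.subtrees ∧ mixed N' u ∧ (∀ c ∈ u.children, uniform N' c) ∧
    ∀ y ∈ T.leaves, y ∉ u.leaves →
      (y ∈ N' ↔ ∃ w, IsLcaNodeLeaf T w u y ∧ w.isSeries)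

def IsCMInsertionNode (T : Cotree V) (Nx : Set V) (u : Cotree V) : Prop :=
  ∃ N', IsMinimalConstrainedCompletion T Nx N' ∧ IsInsertionNode T N' u

def anchored (T u : Cotree V) (Nx : Set V) : Set V :=
  Nx ∪ {y | y ∈ T.leaves ∧ y ∉ u.leaves ∧ ∃ w, IsLcaNodeLeaf T w u y ∧ w.isSeries}
     ∪ {y | ∃ c ∈ u.children, ¬ hollow Nx c ∧ y ∈ c.leaves}

end Cotree

open Function

namespace SimpleGraph

variable {α : Type*} (G : SimpleGraph α)

def IsModule (M : Set α) : Prop :=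
  ∀ y ∉ M, ∀ a ∈ M, ∀ b ∈ M, G.Adj y a → G.Adj y b

def IsInducedPath4 (f : Fin 4 → α) : Prop :=
  Injective f ∧ ∀ i j, G.Adj (f i) (f j) ↔ (i.val + 1 = j.val ∨ j.val + 1 = i.val)

variable {G} {f : Fin 4 → α}

theorem IsInducedPath4.mem_of_isModule (hf : G.IsInducedPath4 f) {M : Set α}
    (hM : G.IsModule M) {i j : Fin 4} (hij : i ≠ j) (hi : f i ∈ M) (hj : f j ∈ M) (k : Fin 4) :
    f k ∈ M := by
  classical
  have path4_modules : ∀ s : Fin 4 → Bool, (∃ i j, i ≠ j ∧ s i ∧ s j) →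
      (∀ k, s k = false → ∀ i j, s i → s j →
        (k.val + 1 = i.val ∨ i.val + 1 = k.val) → (k.val + 1 = j.val ∨ j.val + 1 = k.val)) →
      ∀ k, s k := by
    decide
  have := path4_modules (fun k => decide (f k ∈ M)) ⟨i, j, hij, by simpa, by simpa⟩ ?_ k
  · simpa using this
  · intro k hk i j hi hj hki
    simp only [decide_eq_true_eq, decide_eq_false_iff_not] at hk hi hj
    rw [← hf.2] at hki ⊢
    exact hM _ hk _ hi _ hj hki

theorem IsInducedPath4.not_forall_adj_iff (hf : G.IsInducedPath4 f) (p : Fin 4) (P : Prop) :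
    ¬ ∀ i j, i ≠ p → j ≠ p → i ≠ j → (G.Adj (f i) (f j) ↔ P) := by
  have path4_minus_vertex : ∀ p : Fin 4, ∃ i j k l, i ≠ p ∧ j ≠ p ∧ k ≠ p ∧ l ≠ p ∧
      i ≠ j ∧ k ≠ l ∧ (i.val + 1 = j.val ∨ j.val + 1 = i.val) ∧
      ¬ (k.val + 1 = l.val ∨ l.val + 1 = k.val) := by
    decide
  obtain ⟨i, j, k, l, hi, hj, hk, hl, hij, hkl, hadj, hnadj⟩ := path4_minus_vertex p
  intro h
  rw [← hf.2] at hadj hnadj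
  exact hnadj ((h k l hk hl hkl).2 ((h i j hi hj hij).1 hadj))

end SimpleGraph

namespace Cotree

variable {V : Type u}

@[elab_as_elim]
theorem ind {P : Cotree V → Prop} (leaf : ∀ v, P (.leaf v))
    (node : ∀ b ts, (∀ t ∈ ts, P t) → P (.node b ts)) : ∀ t, P t
  | .leaf v => leaf v
  | .node b ts => node b ts fun t _ => ind leaf node t
termination_by t => t
decreasing_by have := List.sizeOf_lt_of_mem ‹t ∈ ts›; simp_wf; omega

@[simp] theorem leaves_leaf (v : V) : (leaf v).leaves = [v] := by rw [leaves]

@[simp] theorem leaves_node (b : Bool) (ts : List (Cotree V)) :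
    (node b ts).leaves = ts.flatMap leaves := by rw [leaves]; simp

@[simp] theorem subtrees_leaf (v : V) : (leaf v).subtrees = [leaf v] := by rw [subtrees]

@[simp] theorem subtrees_node (b : Bool) (ts : List (Cotree V)) :
    (node b ts).subtrees = node b ts :: ts.flatMap subtrees := by rw [subtrees]; simp

@[simp] theorem isSeries_node {b : Bool} {ts : List (Cotree V)} :
    (node b ts).isSeries ↔ b = true := by
  cases b <;> simp [isSeries]

@[simp] theorem not_adj_leaf (v x y : V) : ¬ (leaf v).adj x y := by rw [adj]; exact id

theorem adj_node (b : Bool) (ts : List (Cotree V)) (x y : V) :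
    (node b ts).adj x y ↔ (∃ t ∈ ts, t.adj x y) ∨
      (b = true ∧ ∃ t ∈ ts, ∃ s ∈ ts, t ≠ s ∧ x ∈ t.leaves ∧ y ∈ s.leaves) := by
  rw [adj]
  simp only [List.mem_attach, true_and, Subtype.exists, exists_prop]

theorem valid_node (b : Bool) (ts : List (Cotree V)) :
    (node b ts).valid ↔ 2 ≤ ts.length ∧ ∀ t ∈ ts, t.valid ∧
      ∀ b' ts', t = .node b' ts' → b' ≠ b := by
  rw [valid]
  simp only [List.mem_attach, forall_const, Subtype.forall]

theorem mem_leaves_node {v : V} {b : Bool} {ts : List (Cotree V)} :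
    v ∈ (node b ts).leaves ↔ ∃ t ∈ ts, v ∈ t.leaves := by simp

theorem mem_subtrees_node {s : Cotree V} {b : Bool} {ts : List (Cotree V)} :
    s ∈ (node b ts).subtrees ↔ s = node b ts ∨ ∃ t ∈ ts, s ∈ t.subtrees := by simp

theorem mem_subtrees_self (t : Cotree V) : t ∈ t.subtrees := by
  cases t <;> simp

theorem mem_subtrees_node_of_mem {t : Cotree V} {b : Bool} {ts : List (Cotree V)} (ht : t ∈ ts) :
    t ∈ (node b ts).subtrees :=
  mem_subtrees_node.2 (.inr ⟨t, ht, mem_subtrees_self t⟩)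

theorem mem_subtrees_trans {t s w : Cotree V} (hs : s ∈ t.subtrees) (hw : w ∈ s.subtrees) :
    w ∈ t.subtrees := by
  induction t using Cotree.ind with
  | leaf v => simp_all
  | node b ts ih =>
    rcases mem_subtrees_node.1 hs with rfl | ⟨t', ht', hs'⟩
    · exact hw
    · exact mem_subtrees_node.2 (.inr ⟨t', ht', ih t' ht' hs'⟩)

theorem leaves_subset_of_mem_subtrees {t u : Cotree V} (hu : u ∈ t.subtrees) :
    u.leaves ⊆ t.leaves := by
  induction t using Cotree.ind with
  | leaf v => simp_all
  | node b ts ih =>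
    rcases mem_subtrees_node.1 hu with rfl | ⟨t', ht', hu'⟩
    · exact List.Subset.refl _
    · exact fun v hv => mem_leaves_node.2 ⟨t', ht', ih t' ht' hu' hv⟩

theorem valid_of_mem_subtrees {t u : Cotree V} (hval : t.valid) (hu : u ∈ t.subtrees) :
    u.valid := by
  induction t using Cotree.ind with
  | leaf v => simp_all
  | node b ts ih =>
    rcases mem_subtrees_node.1 hu with rfl | ⟨t', ht', hu'⟩
    · exact hval
    · exact ih t' ht' (((valid_node b ts).1 hval).2 t' ht').1 hu'

theorem exists_mem_leaves {t : Cotree V} (hval : t.valid) : ∃ v, v ∈ t.leaves := by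
  induction t using Cotree.ind with
  | leaf v => exact ⟨v, by simp⟩
  | node b ts ih =>
    obtain ⟨hlen, hts⟩ := (valid_node b ts).1 hval
    obtain ⟨t, ht⟩ : ∃ t, t ∈ ts := List.exists_mem_of_length_pos (by omega)
    obtain ⟨v, hv⟩ := ih t ht (hts t ht).1
    exact ⟨v, mem_leaves_node.2 ⟨t, ht, hv⟩⟩

theorem nodup_leaves_of_mem_subtrees {t u : Cotree V} (hnd : t.leaves.Nodup)
    (hu : u ∈ t.subtrees) : u.leaves.Nodup := by
  induction t using Cotree.ind with
  | leaf v => simp_all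
  | node b ts ih =>
    rcases mem_subtrees_node.1 hu with rfl | ⟨t', ht', hu'⟩
    · exact hnd
    · rw [leaves_node, List.nodup_flatMap] at hnd
      exact ih t' ht' (hnd.1 t' ht') hu'

theorem child_eq_of_mem_leaves {b : Bool} {ts : List (Cotree V)} (hnd : (node b ts).leaves.Nodup)
    {t₁ t₂ : Cotree V} (h₁ : t₁ ∈ ts) (h₂ : t₂ ∈ ts) {v : V}
    (hv₁ : v ∈ t₁.leaves) (hv₂ : v ∈ t₂.leaves) : t₁ = t₂ := by
  rw [leaves_node, List.nodup_flatMap] at hnd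
  by_contra hne
  have : Std.Symm (Function.onFun List.Disjoint (leaves (V := V))) := ⟨fun _ _ h => h.symm⟩
  exact hnd.2.forall h₁ h₂ hne hv₁ hv₂

theorem child_eq_of_mem_subtrees {b : Bool} {ts : List (Cotree V)}
    (hval : (node b ts).valid) (hnd : (node b ts).leaves.Nodup)
    {u t₁ t₂ : Cotree V} (h₁ : t₁ ∈ ts) (h₂ : t₂ ∈ ts)
    (hu₁ : u ∈ t₁.subtrees) (hu₂ : u ∈ t₂.subtrees) : t₁ = t₂ := by
  obtain ⟨v, hv⟩ := exists_mem_leaves (valid_of_mem_subtrees hval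
    (mem_subtrees_trans (mem_subtrees_node_of_mem h₁) hu₁))
  exact child_eq_of_mem_leaves hnd h₁ h₂ (leaves_subset_of_mem_subtrees hu₁ hv)
    (leaves_subset_of_mem_subtrees hu₂ hv)

theorem mem_leaves_of_adj {t : Cotree V} {x y : V} (h : t.adj x y) :
    x ∈ t.leaves ∧ y ∈ t.leaves := by
  induction t using Cotree.ind with
  | leaf v => simp_all
  | node b ts ih =>
    rcases (adj_node b ts x y).1 h with ⟨t', ht', h'⟩ | ⟨-, t', ht', s', hs', -, hx, hy⟩
    · obtain ⟨hx, hy⟩ := ih t' ht' h'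
      exact ⟨mem_leaves_node.2 ⟨t', ht', hx⟩, mem_leaves_node.2 ⟨t', ht', hy⟩⟩
    · exact ⟨mem_leaves_node.2 ⟨t', ht', hx⟩, mem_leaves_node.2 ⟨s', hs', hy⟩⟩

theorem adj_symm {t : Cotree V} {x y : V} (h : t.adj x y) : t.adj y x := by
  induction t using Cotree.ind with
  | leaf v => simp_all
  | node b ts ih =>
    rcases (adj_node b ts x y).1 h with ⟨t', ht', h'⟩ | ⟨hb, t', ht', s', hs', hne, hx, hy⟩
    · exact (adj_node b ts y x).2 (.inl ⟨t', ht', ih t' ht' h'⟩)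
    · exact (adj_node b ts y x).2 (.inr ⟨hb, s', hs', t', ht', Ne.symm hne, hy, hx⟩)

theorem adj_node_iff_of_mem_child {b : Bool} {ts : List (Cotree V)}
    (hnd : (node b ts).leaves.Nodup) {s : Cotree V} (hs : s ∈ ts) {x y : V}
    (hx : x ∈ s.leaves) (hy : y ∈ s.leaves) : (node b ts).adj x y ↔ s.adj x y := by
  rw [adj_node]
  constructor
  · rintro (⟨t, ht, h⟩ | ⟨-, t, ht, t', ht', hne, hxt, hyt'⟩)
    · rwa [← child_eq_of_mem_leaves hnd ht hs (mem_leaves_of_adj h).1 hx]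
    · exact absurd ((child_eq_of_mem_leaves hnd ht hs hxt hx).trans
        (child_eq_of_mem_leaves hnd hs ht' hy hyt')) hne
  · exact fun h => .inl ⟨s, hs, h⟩

theorem adj_node_iff_of_ne_child {b : Bool} {ts : List (Cotree V)}
    (hnd : (node b ts).leaves.Nodup) {t₁ t₂ : Cotree V} (h₁ : t₁ ∈ ts) (h₂ : t₂ ∈ ts)
    (hne : t₁ ≠ t₂) {x y : V} (hx : x ∈ t₁.leaves) (hy : y ∈ t₂.leaves) :
    (node b ts).adj x y ↔ b = true := by
  rw [adj_node]
  constructor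
  · rintro (⟨t, ht, h⟩ | ⟨hb, -⟩)
    · obtain ⟨hxt, hyt⟩ := mem_leaves_of_adj h
      exact absurd ((child_eq_of_mem_leaves hnd h₁ ht hx hxt).trans
        (child_eq_of_mem_leaves hnd ht h₂ hyt hy)) hne
    · exact hb
  · exact fun hb => .inr ⟨hb, t₁, h₁, t₂, h₂, hne, hx, hy⟩

theorem adj_iff_of_mem_subtrees {t u : Cotree V} (hnd : t.leaves.Nodup) (hu : u ∈ t.subtrees)
    {x y : V} (hx : x ∈ u.leaves) (hy : y ∈ u.leaves) : t.adj x y ↔ u.adj x y := by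
  induction t using Cotree.ind with
  | leaf v => simp_all
  | node b ts ih =>
    rcases mem_subtrees_node.1 hu with rfl | ⟨s, hs, hu'⟩
    · rfl
    · rw [adj_node_iff_of_mem_child hnd hs (leaves_subset_of_mem_subtrees hu' hx)
        (leaves_subset_of_mem_subtrees hu' hy)]
      exact ih s hs (nodup_leaves_of_mem_subtrees hnd (mem_subtrees_node_of_mem hs)) hu'

theorem adj_congr_of_mem_subtrees {t s : Cotree V} (hnd : t.leaves.Nodup) (hs : s ∈ t.subtrees)
    {v v' z : V} (hv : v ∈ s.leaves) (hv' : v' ∈ s.leaves) (hz : z ∉ s.leaves) :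
    t.adj v z ↔ t.adj v' z := by
  induction t using Cotree.ind with
  | leaf w => simp
  | node b ts ih =>
    have not_adj (w : V) (hzt : z ∉ (node b ts).leaves) : ¬ (node b ts).adj w z :=
      fun h => hzt (mem_leaves_of_adj h).2
    rcases mem_subtrees_node.1 hs with rfl | ⟨c, hc, hs'⟩
    · exact iff_of_false (not_adj v hz) (not_adj v' hz)
    have hvc := leaves_subset_of_mem_subtrees hs' hv
    have hv'c := leaves_subset_of_mem_subtrees hs' hv'
    by_cases hzc : z ∈ c.leaves
    · rw [adj_node_iff_of_mem_child hnd hc hvc hzc, adj_node_iff_of_mem_child hnd hc hv'c hzc]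
      exact ih c hc (nodup_leaves_of_mem_subtrees hnd (mem_subtrees_node_of_mem hc)) hs'
    by_cases hzt : z ∈ (node b ts).leaves
    · obtain ⟨c', hc', hzc'⟩ := mem_leaves_node.1 hzt
      have hne : c ≠ c' := fun h => hzc (h ▸ hzc')
      rw [adj_node_iff_of_ne_child hnd hc hc' hne hvc hzc',
        adj_node_iff_of_ne_child hnd hc hc' hne hv'c hzc']
    · exact iff_of_false (not_adj v hzt) (not_adj v' hzt)

theorem isLcaNodeLeaf_node_iff_of_mem_child {b : Bool} {ts : List (Cotree V)}
    (hval : (node b ts).valid) (hnd : (node b ts).leaves.Nodup)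
    {s u : Cotree V} (hs : s ∈ ts) (hu : u ∈ s.subtrees)
    {z : V} (hz : z ∈ s.leaves) (w : Cotree V) :
    IsLcaNodeLeaf (node b ts) w u z ↔ IsLcaNodeLeaf s w u z := by
  constructor
  · rintro ⟨hwT, huw, hzw, hch⟩
    rcases mem_subtrees_node.1 hwT with rfl | ⟨s', hs', hw'⟩
    · exact absurd ⟨hu, hz⟩ (hch s hs)
    · obtain rfl := child_eq_of_mem_subtrees hval hnd hs' hs (mem_subtrees_trans hw' huw) hu
      exact ⟨hw', huw, hzw, hch⟩
  · rintro ⟨hws, huw, hzw, hch⟩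
    exact ⟨mem_subtrees_node.2 (.inr ⟨s, hs, hws⟩), huw, hzw, hch⟩

theorem isLcaNodeLeaf_node_iff_eq {b : Bool} {ts : List (Cotree V)}
    (hval : (node b ts).valid) (hnd : (node b ts).leaves.Nodup)
    {s u : Cotree V} (hs : s ∈ ts) (hu : u ∈ s.subtrees)
    {z : V} (hz : z ∈ (node b ts).leaves) (hzs : z ∉ s.leaves) (w : Cotree V) :
    IsLcaNodeLeaf (node b ts) w u z ↔ w = node b ts := by
  constructor
  · rintro ⟨hwT, huw, hzw, -⟩
    rcases mem_subtrees_node.1 hwT with h | ⟨s', hs', hw'⟩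
    · exact h
    · obtain rfl := child_eq_of_mem_subtrees hval hnd hs' hs (mem_subtrees_trans hw' huw) hu
      exact absurd (leaves_subset_of_mem_subtrees hw' hzw) hzs
  · rintro rfl
    refine ⟨mem_subtrees_self _, mem_subtrees_trans (mem_subtrees_node_of_mem hs) hu, hz, ?_⟩
    rintro c hc ⟨huc, hzc⟩
    exact hzs (child_eq_of_mem_subtrees hval hnd hc hs huc hu ▸ hzc)

theorem adj_iff_exists_isLcaNodeLeaf_isSeries {T u : Cotree V} (hval : T.valid)
    (hnd : T.leaves.Nodup) (hu : u ∈ T.subtrees) {y z : V} (hy : y ∈ u.leaves)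
    (hz : z ∈ T.leaves) (hzu : z ∉ u.leaves) :
    T.adj y z ↔ ∃ w, IsLcaNodeLeaf T w u z ∧ w.isSeries := by
  induction T using Cotree.ind with
  | leaf v => simp_all
  | node b ts ih =>
    rcases mem_subtrees_node.1 hu with rfl | ⟨s, hs, hu'⟩
    · exact absurd hz hzu
    have hys := leaves_subset_of_mem_subtrees hu' hy
    by_cases hzs : z ∈ s.leaves
    · rw [adj_node_iff_of_mem_child hnd hs hys hzs,
        ih s hs (valid_of_mem_subtrees hval (mem_subtrees_node_of_mem hs))
          (nodup_leaves_of_mem_subtrees hnd (mem_subtrees_node_of_mem hs)) hu' hzs]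
      exact exists_congr fun w =>
        and_congr_left fun _ => (isLcaNodeLeaf_node_iff_of_mem_child hval hnd hs hu' hzs w).symm
    · obtain ⟨s', hs', hzs'⟩ := mem_leaves_node.1 hz
      rw [adj_node_iff_of_ne_child hnd hs hs' (fun h => hzs (h ▸ hzs')) hys hzs']
      simp only [isLcaNodeLeaf_node_iff_eq hval hnd hs hu' hz hzs, exists_eq_left, isSeries_node]

section Insertion

variable {T u : Cotree V} {N : Set V}

theorem IsInsertionNode.exists_eq_node (hins : IsInsertionNode T N u) :
    ∃ b ts, u = node b ts := by
  cases u with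
  | leaf v =>
    refine absurd ?_ hins.2.1
    by_cases hv : v ∈ N <;> simp [uniform, full, hollow, hv]
  | node b ts => exact ⟨b, ts, rfl⟩

theorem IsInsertionNode.adj_iff_mem (hval : T.valid) (hnd : T.leaves.Nodup)
    (hins : IsInsertionNode T N u) (hN : ∀ v ∈ N, v ∈ T.leaves) {v z : V}
    (hv : v ∈ u.leaves) (hz : z ∉ u.leaves) : T.adj v z ↔ z ∈ N := by
  by_cases hzT : z ∈ T.leaves
  · rw [adj_iff_exists_isLcaNodeLeaf_isSeries hval hnd hins.1 hv hzT hz, hins.2.2.2 z hzT hz]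
  · exact iff_of_false (fun h => hzT (mem_leaves_of_adj h).2) (fun h => hzT (hN z h))

end Insertion

section GraphPlus

variable {T : Cotree V} {N : Set V}

@[simp] theorem graphPlus_adj_some_some {y z : V} :
    (graphPlus T N).Adj (some y) (some z) ↔ y ≠ z ∧ T.adj y z := by
  simp only [graphPlus, SimpleGraph.fromRel_adj, ne_eq, Option.some.injEq]
  exact and_congr_right fun _ => ⟨fun h => h.elim id adj_symm, .inl⟩

@[simp] theorem graphPlus_adj_none_some {z : V} : (graphPlus T N).Adj none (some z) ↔ z ∈ N := by
  simp [graphPlus]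

@[simp] theorem graphPlus_adj_some_none {z : V} : (graphPlus T N).Adj (some z) none ↔ z ∈ N := by
  simp [graphPlus]

theorem graphPlus_adj_congr {N₁ N₂ : Set V} {a b : Option V}
    (ha : ∀ v, a = none → b = some v → (v ∈ N₁ ↔ v ∈ N₂))
    (hb : ∀ v, a = some v → b = none → (v ∈ N₁ ↔ v ∈ N₂)) :
    (graphPlus T N₁).Adj a b ↔ (graphPlus T N₂).Adj a b := by
  rcases a with _ | y <;> rcases b with _ | z
  · simp
  · simpa using ha z rfl rfl
  · simpa using hb y rfl rfl
  · simp

theorem isModule_graphPlus_insert_none {u : Cotree V}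
    (hout : ∀ v ∈ u.leaves, ∀ z ∉ u.leaves, T.adj v z ↔ z ∈ N) :
    (graphPlus T N).IsModule (insert none (some '' {v | v ∈ u.leaves})) := by
  have adj_iff : ∀ z ∉ u.leaves, ∀ a ∈ insert none (some '' {v | v ∈ u.leaves}),
      (graphPlus T N).Adj (some z) a ↔ z ∈ N := by
    rintro z hz a (rfl | ⟨v, hv, rfl⟩)
    · exact graphPlus_adj_some_none
    · rw [graphPlus_adj_some_some, ← hout v hv z hz]
      exact ⟨fun h => adj_symm h.2, fun h => ⟨fun e => hz (e ▸ hv), adj_symm h⟩⟩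
  rintro (_ | z) hy a ha b hb hab
  · exact absurd (Set.mem_insert _ _) hy
  · have hz : z ∉ u.leaves := fun hz => hy (Set.mem_insert_of_mem _ ⟨z, hz, rfl⟩)
    exact (adj_iff z hz b hb).2 ((adj_iff z hz a ha).1 hab)

theorem isModule_graphPlus_leaves (hnd : T.leaves.Nodup) {t : Cotree V} (ht : t ∈ T.subtrees)
    (hunif : uniform N t) : (graphPlus T N).IsModule (some '' {v | v ∈ t.leaves}) := by
  rintro (_ | z) hy _ ⟨v, hv, rfl⟩ _ ⟨v', hv', rfl⟩ hab
  · rw [graphPlus_adj_none_some] at hab ⊢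
    exact hunif.elim (fun h => h v' hv') (fun h => absurd hab (h v hv))
  · have hz : z ∉ t.leaves := fun hz => hy ⟨z, hz, rfl⟩
    rw [graphPlus_adj_some_some] at hab ⊢
    exact ⟨fun e => hz (e ▸ hv'),
      adj_symm ((adj_congr_of_mem_subtrees hnd ht hv hv' hz).1 (adj_symm hab.2))⟩

/-- `x` behaves towards `V(u)` like a new child of `u`, so no induced `P₄` passes through `x`
and a leaf of `u`. -/
theorem not_isInducedPath4_graphPlus (hnd : T.leaves.Nodup) {b : Bool} {ts : List (Cotree V)}
    (hu : node b ts ∈ T.subtrees)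
    (hout : ∀ v ∈ (node b ts).leaves, ∀ z ∉ (node b ts).leaves, T.adj v z ↔ z ∈ N)
    (hunif : ∀ t ∈ ts, uniform N t) {f : Fin 4 → Option V}
    (hf : (graphPlus T N).IsInducedPath4 f) {p q : Fin 4} {w : V} (hp : f p = none)
    (hq : f q = some w) (hw : w ∈ (node b ts).leaves) : False := by
  have hpq : p ≠ q := by rintro rfl; simp [hp] at hq
  have hinside := hf.mem_of_isModule (isModule_graphPlus_insert_none hout) hpq
    (hp ▸ Set.mem_insert _ _) (hq ▸ Set.mem_insert_of_mem _ ⟨w, hw, rfl⟩)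
  have hchild : ∀ k ≠ p, ∃ z t, f k = some z ∧ t ∈ ts ∧ z ∈ t.leaves := by
    intro k hk
    rcases hinside k with h | ⟨z, hz, h⟩
    · exact absurd (hf.1 (h.trans hp.symm)) hk
    · obtain ⟨t, ht, hzt⟩ := mem_leaves_node.1 hz
      exact ⟨z, t, h.symm, ht, hzt⟩
  refine hf.not_forall_adj_iff p (b = true) fun i j hip hjp hij => ?_
  obtain ⟨zi, ti, hfi, hti, hzi⟩ := hchild i hip
  obtain ⟨zj, tj, hfj, htj, hzj⟩ := hchild j hjp
  have htij : ti ≠ tj := by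
    rintro rfl
    have := hf.mem_of_isModule (isModule_graphPlus_leaves hnd
      (mem_subtrees_trans hu (mem_subtrees_node_of_mem hti)) (hunif ti hti)) hij
      ⟨zi, hzi, hfi.symm⟩ ⟨zj, hzj, hfj.symm⟩ p
    simp [hp] at this
  have hzij : zi ≠ zj := fun h => hij (hf.1 (hfi.trans (h ▸ hfj.symm)))
  rw [hfi, hfj, graphPlus_adj_some_some, adj_iff_of_mem_subtrees hnd hu
    (mem_leaves_node.2 ⟨ti, hti, hzi⟩) (mem_leaves_node.2 ⟨tj, htj, hzj⟩),
    adj_node_iff_of_ne_child (nodup_leaves_of_mem_subtrees hnd hu) hti htj htij hzi hzj]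
  exact and_iff_right hzij

theorem IsInsertionNode.isCograph_graphPlus_diff (hval : T.valid) (hnd : T.leaves.Nodup)
    (hN : ∀ v ∈ N, v ∈ T.leaves) (hG : IsCograph (graphPlus T N)) {b : Bool}
    {ts : List (Cotree V)} (hins : IsInsertionNode T N (node b ts)) {c : Cotree V}
    (hc : c ∈ ts) : IsCograph (graphPlus T (N \ {v | v ∈ c.leaves})) := by
  have hcu : ∀ v ∈ c.leaves, v ∈ (node b ts).leaves := fun v hv => mem_leaves_node.2 ⟨c, hc, hv⟩
  rintro ⟨f, hf⟩
  by_cases hx : ∃ p q w, f p = none ∧ f q = some w ∧ w ∈ c.leaves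
  · obtain ⟨p, q, w, hp, hq, hw⟩ := hx
    refine not_isInducedPath4_graphPlus hnd hins.1 ?_ ?_ hf hp hq (hcu w hw)
    · intro v hv z hz
      rw [hins.adj_iff_mem hval hnd hN hv hz]
      exact (and_iff_left fun hzc => hz (hcu z hzc)).symm
    · intro t ht
      by_cases htc : t = c
      · exact .inr fun v hv hvN => hvN.2 (htc ▸ hv)
      · have hund := nodup_leaves_of_mem_subtrees hnd hins.1
        exact (hins.2.2.1 t ht).imp
          (fun h v hv => ⟨h v hv, fun hvc => htc (child_eq_of_mem_leaves hund ht hc hv hvc)⟩)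
          (fun h v hv hvN => h v hv hvN.1)
  · simp only [not_exists, not_and] at hx
    refine hG ⟨f, hf.1, fun i j => (graphPlus_adj_congr ?_ ?_).trans (hf.2 i j)⟩
    · exact fun v hi hj => ⟨fun h => ⟨h, hx i j v hi hj⟩, And.left⟩
    · exact fun v hi hj => ⟨fun h => ⟨h, hx j i v hj hi⟩, And.left⟩

end GraphPlus

section Minimal

variable {T u : Cotree V} {Nx N : Set V}

theorem IsMinimalConstrainedCompletion.hollow_of_hollow (hval : T.valid) (hnd : T.leaves.Nodup)
    (hmin : IsMinimalConstrainedCompletion T Nx N) {b : Bool} {ts : List (Cotree V)}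
    (hins : IsInsertionNode T N (node b ts)) {c : Cotree V} (hc : c ∈ ts)
    (hcx : hollow Nx c) : hollow N c := by
  obtain ⟨⟨hsub, hN, hG⟩, hmin⟩ := hmin
  have hdiff : N \ {v | v ∈ c.leaves} = N := hmin _ Set.sdiff_subset
    ⟨fun v hv => ⟨hsub hv, fun hvc => hcx v hvc hv⟩, fun v hv => hN v hv.1,
      hins.isCograph_graphPlus_diff hval hnd hN hG hc⟩
  intro v hv hvN
  exact (hdiff.symm ▸ hvN : v ∈ N \ {v | v ∈ c.leaves}).2 hv

theorem IsMinimalConstrainedCompletion.eq_anchored (hval : T.valid) (hnd : T.leaves.Nodup)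
    (hmin : IsMinimalConstrainedCompletion T Nx N) (hins : IsInsertionNode T N u) :
    N = anchored T u Nx := by
  obtain ⟨b, ts, rfl⟩ := hins.exists_eq_node
  have hsub : Nx ⊆ N := hmin.1.1
  have hN : ∀ v ∈ N, v ∈ T.leaves := hmin.1.2.1
  ext y
  constructor
  · intro hy
    by_cases hyu : y ∈ (node b ts).leaves
    · obtain ⟨c, hc, hyc⟩ := mem_leaves_node.1 hyu
      exact .inr ⟨c, hc, fun hcx => hmin.hollow_of_hollow hval hnd hins hc hcx y hyc hy, hyc⟩
    · exact .inl (.inr ⟨hN y hy, hyu, (hins.2.2.2 y (hN y hy) hyu).1 hy⟩)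
  · rintro ((hy | ⟨hyT, hyu, hlca⟩) | ⟨c, hc, hcx, hyc⟩)
    · exact hsub hy
    · exact (hins.2.2.2 y hyT hyu).2 hlca
    · obtain ⟨v, hvc, hvN⟩ : ∃ v ∈ c.leaves, v ∈ Nx := by simpa [hollow] using hcx
      exact (hins.2.2.1 c hc).resolve_right (fun h => h v hvc (hsub hvN)) y hyc

end Minimal

end Cotree

theorem stmt_10_general {V : Type u} (T : Cotree V) (Nx : Set V)
    (hval : T.valid) (hnd : T.leaves.Nodup)
    (u : Cotree V) (hcm : Cotree.IsCMInsertionNode T Nx u) :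
    ∀ N' : Set V,
      (Cotree.IsMinimalConstrainedCompletion T Nx N' ∧ Cotree.IsInsertionNode T N' u) ↔
        N' = Cotree.anchored T u Nx := by
  obtain ⟨N₀, hmin₀, hins₀⟩ := hcm
  intro N'
  constructor
  · exact fun ⟨hmin, hins⟩ => hmin.eq_anchored hval hnd hins
  · rintro rfl
    rw [← hmin₀.eq_anchored hval hnd hins₀]
    exact ⟨hmin₀, hins₀⟩

theorem stmt_10 {V : Type u} (T : Cotree V) (Nx : Set V)
    (hval : T.valid) (hnd : T.leaves.Nodup)
    (hNx : ∀ v ∈ Nx, v ∈ T.leaves) (hmix : Cotree.mixed Nx T)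
    (u : Cotree V) (hcm : Cotree.IsCMInsertionNode T Nx u) :
    ∀ N' : Set V,
      (Cotree.IsMinimalConstrainedCompletion T Nx N' ∧ Cotree.IsInsertionNode T N' u) ↔
        N' = Cotree.anchored T u Nx :=
  stmt_10_general T Nx hval hnd u hcm
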